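/- arXiv:2505.10504 — 4 statements merged into one kernel-verified Lean document; each statement's English description precedes it below -/
import Mathlib

section
/- Let B be a division ring equipped with an involution σ (a ring anti-automorphism with σ∘σ = id); write b̄ = σ(b). Let ε ∈ {1, −1}. If there exists x ∈ B with x ≠ 0 such that ε·α·x̄ = x·ᾱ for all α ∈ B, then ε = 1 and σ is the identity map. -/
/-- Let `B` be a division ring equipped with an involution `σ`
(a ring anti-automorphism with `σ ∘ σ = id`). Let `ε ∈ {1, −1}`. If there exists
`x ≠ 0` in `B` such that `ε·α·σ(x) = x·σ(α)` for all `α ∈ B`, then `ε = 1` and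
`σ` is the identity map. -/
theorem stmt_0 (B : Type*) [DivisionRing B]
    (σ : B → B)
    (hadd : ∀ a b : B, σ (a + b) = σ a + σ b)
    (hmul : ∀ a b : B, σ (a * b) = σ b * σ a)
    (hone : σ 1 = 1)
    (hinvo : ∀ a : B, σ (σ a) = a)
    (ε : B) (hε : ε = 1 ∨ ε = -1)
    (x : B) (hx : x ≠ 0)
    (hrel : ∀ α : B, ε * α * σ x = x * σ α) :
    ε = 1 ∧ ∀ a : B, σ a = a := by
  have hσ0 : σ 0 = 0 := by
    have h := hadd 0 0
    rw [add_zero] at h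
    exact (left_eq_add.mp h)
  have hσx : σ x ≠ 0 := fun h => hx (by rw [← hinvo x, h, hσ0])
  have hε1 : ε = 1 := by
    have h := hrel x
    rw [mul_assoc] at h
    have h' : ε * (x * σ x) = 1 * (x * σ x) := by rw [one_mul]; exact h
    exact mul_right_cancel₀ (mul_ne_zero hx hσx) h'
  subst hε1
  refine ⟨rfl, ?_⟩
  have hrel' : ∀ α : B, α * σ x = x * σ α := by
    intro α; have := hrel α; rwa [one_mul] at this
  have hσxx : σ x = x := by
    have := hrel' 1; rwa [one_mul, hone, mul_one] at this
  have key : ∀ α : B, σ α = x⁻¹ * α * x := by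
    intro α
    have h := hrel' α
    rw [hσxx] at h
    rw [mul_assoc, h, ← mul_assoc, inv_mul_cancel₀ hx, one_mul]
  have comm : ∀ a b : B, a * b = b * a := by
    intro a b
    have h12 : x⁻¹ * (a * b) * x = x⁻¹ * b * x * (x⁻¹ * a * x) :=
      (key (a * b)).symm.trans ((hmul a b).trans (by rw [key a, key b]))
    have e1 : x⁻¹ * (a * b) * x = x⁻¹ * (b * a) * x := by
      rw [h12]
      simp [mul_assoc, mul_inv_cancel_left₀ hx, inv_mul_cancel_left₀ hx]
    have e2 := mul_right_cancel₀ hx e1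
    exact mul_left_cancel₀ (inv_ne_zero hx) e2
  intro a
  rw [key a, mul_assoc, comm a x, ← mul_assoc, inv_mul_cancel₀ hx, one_mul]
end

section
/- Let B be a division ring that is a ℚ-algebra, with involution σ, and let ε ∈ {1, −1}; assume it is NOT the case that both ε = 1 and σ = id. Let J' be an invertible k×k matrix over B with J' = ε·σ(J')ᵗ. For an r×k matrix h over B set h* := J'⁻¹·σ(h)ᵗ (a k×r matrix). If g₀ is an r×k matrix over B such that g₀·h₀* = h₀·g₀* for all r×k matrices h₀ over B, then g₀ = 0. Consequently the pairing ⟨g₀, h₀⟩ := g₀·h₀* − h₀·g₀* on r×k matrices is nondegenerate. -/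
open Matrix

private lemma key_scalar {B : Type*} [DivisionRing B] [CharZero B] (σ : B → B)
    (hmul : ∀ a b : B, σ (a * b) = σ b * σ a) (hinvo : ∀ a : B, σ (σ a) = a)
    (ε : B) (hε : ε = 1 ∨ ε = -1) (hnontriv : ¬ (ε = 1 ∧ ∀ b : B, σ b = b))
    (c : B) (hc1 : c = ε * σ c) (hc2 : ∀ b : B, c * σ b = b * c) : c = 0 := by
  by_contra hc
  have hσ : ∀ b : B, σ b = c⁻¹ * (b * c) := fun b => by
    rw [← hc2 b, ← mul_assoc, inv_mul_cancel₀ hc, one_mul]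
  have hcomm : ∀ x y : B, x * y = y * x := by
    intro x y
    have h1 : c * σ (y * x) = (y * x) * c := hc2 _
    rw [hmul] at h1
    have h3 : c * (σ x * σ y) = x * (y * c) := by
      rw [← mul_assoc, hc2 x, mul_assoc, hc2 y]
    rw [h3] at h1
    have h4 : x * y * c = y * x * c := by rw [mul_assoc, h1, mul_assoc]
    exact mul_right_cancel₀ hc h4
  have hid : ∀ b : B, σ b = b := fun b => by
    rw [hσ b, hcomm b c, ← mul_assoc, inv_mul_cancel₀ hc, one_mul]
  have hε1 : ε ≠ 1 := fun h => hnontriv ⟨h, hid⟩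
  have hεm : ε = -1 := hε.resolve_left hε1
  rw [hεm, hid, neg_one_mul] at hc1
  have h2 : (2 : B) * c = 0 := by
    rw [two_mul]
    nth_rewrite 1 [hc1]
    exact neg_add_cancel c
  exact hc (by
    rcases mul_eq_zero.1 h2 with h | h
    · exact absurd h two_ne_zero
    · exact h)

/-- Let `B` be a division ring that is a `ℚ`-algebra, with
involution `σ`, and `ε ∈ {1,−1}`; assume NOT both `ε = 1` and `σ = id`. Let `J'`
be an invertible `k×k` matrix over `B` with `J' = ε·σ(J')ᵗ`. For an `r×k` matrix
`h` set `h* := J'⁻¹·σ(h)ᵗ`. If `g₀` is an `r×k` matrix with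
`g₀·h₀* = h₀·g₀*` for all `r×k` matrices `h₀`, then `g₀ = 0`;
i.e. the pairing `⟨g₀,h₀⟩ = g₀·h₀* − h₀·g₀*` is nondegenerate. -/
theorem stmt_2 (B : Type*) [DivisionRing B] [CharZero B]
    (σ : B → B)
    (hadd : ∀ a b : B, σ (a + b) = σ a + σ b)
    (hmul : ∀ a b : B, σ (a * b) = σ b * σ a)
    (hone : σ 1 = 1)
    (hinvo : ∀ a : B, σ (σ a) = a)
    (ε : B) (hε : ε = 1 ∨ ε = -1)
    (hnontriv : ¬ (ε = 1 ∧ ∀ b : B, σ b = b))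
    (r k : ℕ)
    (J' : Matrix (Fin k) (Fin k) B) [Invertible J']
    (hJ' : J' = ε • ((J'.map σ)ᵀ))
    (g₀ : Matrix (Fin r) (Fin k) B)
    (hg : ∀ h₀ : Matrix (Fin r) (Fin k) B,
      g₀ * (⅟J' * (h₀.map σ)ᵀ) = h₀ * (⅟J' * (g₀.map σ)ᵀ)) :
    g₀ = 0 := by
  letI : StarRing B :=
    { star := σ
      star_involutive := hinvo
      star_mul := hmul
      star_add := hadd }
  have hstar : ∀ b : B, star b = σ b := fun _ => rfl
  have hε2 : ε * ε = 1 := by rcases hε with h | h <;> simp [h]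
  have hεc : ∀ b : B, ε * b = b * ε := by rcases hε with h | h <;> simp [h]
  have hmapσ : ∀ {m n : ℕ} (X : Matrix (Fin m) (Fin n) B), (X.map σ)ᵀ = Xᴴ := by
    intro m n X; ext i j; rfl
  -- ε-smul commutes past multiplication
  have hsmul : ∀ {m n p : ℕ} (X : Matrix (Fin m) (Fin n) B)
      (Y : Matrix (Fin n) (Fin p) B), X * (ε • Y) = ε • (X * Y) := by
    intro m n p X Y
    ext i j
    simp only [Matrix.mul_apply, Matrix.smul_apply, smul_eq_mul, Finset.mul_sum]
    refine Finset.sum_congr rfl fun q _ => ?_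
    rw [← mul_assoc, ← hεc, mul_assoc]
  have hsmul' : ∀ {m n p : ℕ} (X : Matrix (Fin m) (Fin n) B)
      (Y : Matrix (Fin n) (Fin p) B), (ε • X) * Y = ε • (X * Y) := by
    intro m n p X Y
    ext i j
    simp only [Matrix.mul_apply, Matrix.smul_apply, smul_eq_mul, Finset.mul_sum]
    exact Finset.sum_congr rfl fun q _ => by rw [mul_assoc]
  have hzero : σ 0 = 0 := star_zero B
  set A := g₀ * ⅟J' with hA
  -- (⅟J')ᴴ = ε • ⅟J'
  have hJ'' : J' = ε • J'ᴴ := by rw [← hmapσ]; exact hJ'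
  have hInv : (⅟J')ᴴ = ε • ⅟J' := by
    have h1 : (⅟J')ᴴ * J'ᴴ = 1 := by
      rw [← conjTranspose_mul, mul_invOf_self, conjTranspose_one]
    have hJH : J'ᴴ = ε • J' := by
      conv_rhs => rw [hJ'']
      rw [smul_smul, hε2, one_smul]
    have h2 : ε • ((⅟J')ᴴ * J') = 1 := by
      rw [← hsmul, ← hJH]; exact h1
    have h3 : (⅟J')ᴴ * J' = ε • 1 := by
      calc (⅟J')ᴴ * J' = (ε * ε) • ((⅟J')ᴴ * J') := by rw [hε2, one_smul]
        _ = ε • (ε • ((⅟J')ᴴ * J')) := by rw [smul_smul]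
        _ = ε • 1 := by rw [h2]
    calc (⅟J')ᴴ = (⅟J')ᴴ * J' * ⅟J' := by
          rw [Matrix.mul_assoc, mul_invOf_self, Matrix.mul_one]
      _ = (ε • 1) * ⅟J' := by rw [h3]
      _ = ε • ⅟J' := by rw [smul_mul_assoc, Matrix.one_mul]
  have hM : ⅟J' * g₀ᴴ = ε • Aᴴ := by
    rw [hA, conjTranspose_mul, hInv, hsmul', smul_smul, hε2, one_smul]
  -- entrywise relation
  have hkey : ∀ (i : Fin r) (p : Fin k) (b : B),
      A i p * σ b = b * (ε * σ (A i p)) := by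
    intro i p b
    have h0 := hg (Matrix.single i p b)
    rw [hmapσ, hmapσ, ← Matrix.mul_assoc, ← hA, hM] at h0
    have h1 := congrFun (congrFun h0 i) i
    simp only [Matrix.mul_apply, conjTranspose_apply, Matrix.smul_apply,
      smul_eq_mul, Matrix.single, of_apply, apply_ite star, star_zero, mul_ite,
      mul_zero, Finset.sum_ite_eq, Finset.mem_univ, if_true, hstar, hzero] at h1
    simpa [hstar] using h1
  -- conclude entries of A vanish, hence A = 0, hence g₀ = 0
  have hA0 : A = 0 := by
    ext i p
    have hc1 : A i p = ε * σ (A i p) := by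
      have := hkey i p 1
      rwa [hone, mul_one, one_mul] at this
    have hc2 : ∀ b : B, A i p * σ b = b * A i p := by
      intro b
      rw [hkey i p b, ← hc1]
    exact key_scalar σ hmul hinvo ε hε hnontriv _ hc1 hc2
  have : g₀ = A * J' := by
    rw [hA, Matrix.mul_assoc, invOf_mul_self, Matrix.mul_one]
  rw [this, hA0, Matrix.zero_mul]
end

section
/- Let g ≥ 1, m ≥ 1, and 0 ≤ p ≤ g. Let W ⊆ ℚ^{2g} be the ℚ-span of the first p standard basis vectors (an isotropic subspace for the standard symplectic form), and identify Λ_W := ℤ^{2g} ∩ W with ℤ^p. Every X ∈ Sp_{2g}(ℤ) with X·W = W restricts to an automorphism of Λ_W, giving a homomorphism {X ∈ Sp_{2g}(ℤ)[m] : X·W = W} → GL_p(ℤ). The image of this homomorphism is exactly GL_p(ℤ)[m], the group of A ∈ GL_p(ℤ) with A ≡ 1 (mod m). -/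
open Matrix


def Uspace (g p : ℕ) : Submodule ℚ (Fin g ⊕ Fin g → ℚ) where
  carrier := {v | (∀ i : Fin g, p ≤ i.val → v (Sum.inl i) = 0) ∧ ∀ i : Fin g, v (Sum.inr i) = 0}
  add_mem' := by
    rintro a b ⟨ha1, ha2⟩ ⟨hb1, hb2⟩
    exact ⟨fun i hi => by simp [Pi.add_apply, ha1 i hi, hb1 i hi],
           fun i => by simp [Pi.add_apply, ha2 i, hb2 i]⟩
  zero_mem' := ⟨fun _ _ => rfl, fun _ => rfl⟩
  smul_mem' := by
    rintro c a ⟨h1, h2⟩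
    exact ⟨fun i hi => by simp [h1 i hi], fun i => by simp [h2 i]⟩

lemma mem_Uspace {g p : ℕ} (v : Fin g ⊕ Fin g → ℚ) :
    v ∈ Uspace g p ↔ (∀ i : Fin g, p ≤ i.val → v (Sum.inl i) = 0) ∧ ∀ i : Fin g, v (Sum.inr i) = 0 :=
  Iff.rfl

lemma span_eq_U (g p : ℕ) :
    Submodule.span ℚ {v | ∃ i : Fin g, i.val < p ∧ v = Pi.single (Sum.inl i) (1 : ℚ)} = Uspace g p := by
  apply le_antisymm
  · rw [Submodule.span_le]
    rintro v ⟨i, hi, rfl⟩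
    refine ⟨fun k hk => ?_, fun k => ?_⟩
    · apply Pi.single_eq_of_ne
      intro h
      rw [Sum.inl.injEq] at h
      subst h
      omega
    · apply Pi.single_eq_of_ne
      simp
  · intro v hv
    obtain ⟨h1, h2⟩ := hv
    have hv' : v = ∑ c : Fin g ⊕ Fin g, v c • (Pi.single c (1 : ℚ) : Fin g ⊕ Fin g → ℚ) := by
      funext j
      rw [Finset.sum_apply]
      simp [Pi.single_apply, eq_comm]
    rw [hv']
    apply Submodule.sum_mem
    rintro (i | i) -
    · by_cases hi : i.val < p
      · exact Submodule.smul_mem _ _ (Submodule.subset_span ⟨i, hi, rfl⟩)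
      · rw [h1 i (le_of_not_gt hi), zero_smul]; exact Submodule.zero_mem _
    · rw [h2 i, zero_smul]; exact Submodule.zero_mem _

lemma single_mem_U {g p : ℕ} (j : Fin g) (hj : j.val < p) :
    (Pi.single (Sum.inl j) (1 : ℚ) : Fin g ⊕ Fin g → ℚ) ∈ Uspace g p := by
  refine ⟨fun k hk => Pi.single_eq_of_ne ?_ _, fun k => Pi.single_eq_of_ne (by simp) _⟩
  intro h
  rw [Sum.inl.injEq] at h
  subst h
  omega

lemma sum_fin_restrict {M : Type*} [AddCommMonoid M] {g p : ℕ} (hp : p ≤ g) (f : Fin g → M)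
    (hf : ∀ k : Fin g, p ≤ k.val → f k = 0) :
    ∑ k : Fin g, f k = ∑ k : Fin p, f (Fin.castLE hp k) := by
  have h : ∑ k ∈ Finset.univ.map (Fin.castLEEmb hp), f k = ∑ k : Fin g, f k := by
    apply Finset.sum_subset (Finset.subset_univ _)
    intro x _ hx
    apply hf
    by_contra hlt
    push_neg at hlt
    exact hx (Finset.mem_map.mpr ⟨⟨x.val, hlt⟩, Finset.mem_univ _, rfl⟩)
  rw [← h, Finset.sum_map]
  rfl

lemma maps_U {g p : ℕ} (X : Matrix (Fin g ⊕ Fin g) (Fin g ⊕ Fin g) ℤ)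
    (h1 : ∀ k j : Fin g, p ≤ k.val → j.val < p → X (Sum.inl k) (Sum.inl j) = 0)
    (h2 : ∀ k j : Fin g, j.val < p → X (Sum.inr k) (Sum.inl j) = 0) :
    Submodule.map (Matrix.mulVecLin (X.map (fun x : ℤ => (x : ℚ)))) (Uspace g p) ≤ Uspace g p := by
  rintro _ ⟨v, ⟨hv1, hv2⟩, rfl⟩
  rw [mulVecLin_apply]
  have hentry : ∀ c c', (X.map (fun x : ℤ => (x : ℚ))) c c' = ((X c c' : ℤ) : ℚ) := fun _ _ => rfl
  constructor
  · intro i hi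
    show ∑ c, (X.map (fun x : ℤ => (x : ℚ))) (Sum.inl i) c * v c = 0
    rw [Fintype.sum_sum_type]
    rw [Finset.sum_eq_zero, Finset.sum_eq_zero, add_zero]
    · intro k _
      rw [hv2 k, mul_zero]
    · intro k _
      by_cases hk : k.val < p
      · rw [hentry, h1 i k hi hk]; simp
      · rw [hv1 k (le_of_not_gt hk), mul_zero]
  · intro i
    show ∑ c, (X.map (fun x : ℤ => (x : ℚ))) (Sum.inr i) c * v c = 0
    rw [Fintype.sum_sum_type]
    rw [Finset.sum_eq_zero, Finset.sum_eq_zero, add_zero]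
    · intro k _
      rw [hv2 k, mul_zero]
    · intro k _
      by_cases hk : k.val < p
      · rw [hentry, h2 i k hk]; simp
      · rw [hv1 k (le_of_not_gt hk), mul_zero]

/-- Let `g ≥ 1`, `m ≥ 1`, `0 ≤ p ≤ g`. Let `W ⊆ ℚ^{2g}` be the
`ℚ`-span of the first `p` standard basis vectors (isotropic for the standard
symplectic form). Restriction to `Λ_W = ℤ^{2g} ∩ W ≅ ℤ^p` gives a homomorphism
`{X ∈ Sp_{2g}(ℤ)[m] : X·W = W} → GL_p(ℤ)`, whose image is exactly
`GL_p(ℤ)[m]`, the matrices `A ∈ GL_p(ℤ)` with `A ≡ 1 (mod m)`. -/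
theorem stmt_11 (g m p : ℕ) (hg : 1 ≤ g) (hm : 1 ≤ m) (hp : p ≤ g) :
    let J : Matrix (Fin g ⊕ Fin g) (Fin g ⊕ Fin g) ℤ := Matrix.fromBlocks 0 1 (-1) 0
    let W : Submodule ℚ (Fin g ⊕ Fin g → ℚ) :=
      Submodule.span ℚ
        {v | ∃ i : Fin g, i.val < p ∧ v = Pi.single (Sum.inl i) (1 : ℚ)}
    ∀ A : Matrix (Fin p) (Fin p) ℤ,
      (∃ X : Matrix (Fin g ⊕ Fin g) (Fin g ⊕ Fin g) ℤ,
          Xᵀ * J * X = J ∧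
          (∀ i j, (m : ℤ) ∣ (X i j - (1 : Matrix (Fin g ⊕ Fin g) (Fin g ⊕ Fin g) ℤ) i j)) ∧
          Submodule.map (Matrix.mulVecLin (X.map (fun x : ℤ => (x : ℚ)))) W = W ∧
          (∀ i j : Fin p,
            X (Sum.inl (Fin.castLE hp i)) (Sum.inl (Fin.castLE hp j)) = A i j)) ↔
      (IsUnit A ∧
        ∀ i j : Fin p, (m : ℤ) ∣ (A i j - (1 : Matrix (Fin p) (Fin p) ℤ) i j)) := by
  intro J W A
  have hW : W = Uspace g p := span_eq_U g p
  rw [hW]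
  have hJJ : J * J = -1 := by
    show (fromBlocks 0 1 (-1) 0 : Matrix (Fin g ⊕ Fin g) (Fin g ⊕ Fin g) ℤ) *
      fromBlocks 0 1 (-1) 0 = -1
    rw [fromBlocks_multiply]
    simp [← Matrix.fromBlocks_one, Matrix.fromBlocks_neg]
  constructor
  · rintro ⟨X, hsymp, hmod, hWmap, hblock⟩
    have hcong : ∀ i j : Fin p, (m : ℤ) ∣ (A i j - (1 : Matrix (Fin p) (Fin p) ℤ) i j) := by
      intro i j
      have h := hmod (Sum.inl (Fin.castLE hp i)) (Sum.inl (Fin.castLE hp j))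
      rw [hblock] at h
      have hone : (1 : Matrix (Fin g ⊕ Fin g) (Fin g ⊕ Fin g) ℤ)
          (Sum.inl (Fin.castLE hp i)) (Sum.inl (Fin.castLE hp j))
          = (1 : Matrix (Fin p) (Fin p) ℤ) i j := by
        simp [Matrix.one_apply, Fin.castLE_inj]
      rwa [hone] at h
    refine ⟨?_, hcong⟩
    -- the inverse of X
    set Y : Matrix (Fin g ⊕ Fin g) (Fin g ⊕ Fin g) ℤ := (-J) * Xᵀ * J with hYdef
    have hYX : Y * X = 1 := by
      have h : Xᵀ * (J * X) = J := by rw [← Matrix.mul_assoc, hsymp]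
      calc Y * X = (-J) * (Xᵀ * (J * X)) := by simp only [hYdef, Matrix.mul_assoc]
      _ = (-J) * J := by rw [h]
      _ = 1 := by rw [Matrix.neg_mul, hJJ, neg_neg]
    -- columns of X
    have hmem : ∀ j : Fin g, j.val < p →
        (X.map (fun x : ℤ => (x : ℚ))).mulVecLin (Pi.single (Sum.inl j) (1 : ℚ)) ∈ Uspace g p := by
      intro j hj
      rw [← hWmap]
      exact Submodule.mem_map_of_mem (single_mem_U j hj)
    have hcol1 : ∀ (j k : Fin g), j.val < p → p ≤ k.val → X (Sum.inl k) (Sum.inl j) = 0 := by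
      intro j k hj hk
      have h := (hmem j hj).1 k hk
      rw [mulVecLin_apply, Matrix.mulVec_single] at h
      have : ((X (Sum.inl k) (Sum.inl j) : ℤ) : ℚ) = 0 := by simpa using h
      exact_mod_cast this
    have hcol2 : ∀ (j k : Fin g), j.val < p → X (Sum.inr k) (Sum.inl j) = 0 := by
      intro j k hj
      have h := (hmem j hj).2 k
      rw [mulVecLin_apply, Matrix.mulVec_single] at h
      have : ((X (Sum.inr k) (Sum.inl j) : ℤ) : ℚ) = 0 := by simpa using h
      exact_mod_cast this
    -- B * A = 1
    set B : Matrix (Fin p) (Fin p) ℤ :=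
      fun i j => Y (Sum.inl (Fin.castLE hp i)) (Sum.inl (Fin.castLE hp j)) with hBdef
    have hBA : B * A = 1 := by
      ext i j
      have h := congrArg (fun (N : Matrix (Fin g ⊕ Fin g) (Fin g ⊕ Fin g) ℤ) =>
        N (Sum.inl (Fin.castLE hp i)) (Sum.inl (Fin.castLE hp j))) hYX
      simp only [Matrix.mul_apply] at h
      rw [Fintype.sum_sum_type] at h
      have h2 : ∑ k : Fin g, Y (Sum.inl (Fin.castLE hp i)) (Sum.inr k) *
          X (Sum.inr k) (Sum.inl (Fin.castLE hp j)) = 0 :=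
        Finset.sum_eq_zero (fun k _ => by rw [hcol2 (Fin.castLE hp j) k j.isLt, mul_zero])
      rw [h2, add_zero] at h
      rw [sum_fin_restrict hp _ (fun k hk => by
        rw [hcol1 (Fin.castLE hp j) k j.isLt hk, mul_zero])] at h
      rw [Matrix.mul_apply]
      rw [show ∑ k : Fin p, B i k * A k j =
        ∑ k : Fin p, Y (Sum.inl (Fin.castLE hp i)) (Sum.inl (Fin.castLE hp k)) *
          X (Sum.inl (Fin.castLE hp k)) (Sum.inl (Fin.castLE hp j)) from by
          apply Finset.sum_congr rfl
          intro k _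
          rw [hBdef, hblock]]
      rw [h]
      simp [Matrix.one_apply, Fin.castLE_inj]
    exact ⟨⟨A, B, mul_eq_one_comm.mpr hBA, hBA⟩, rfl⟩
  · rintro ⟨hAunit, hA2⟩
    obtain ⟨u, hu⟩ := hAunit
    set B : Matrix (Fin p) (Fin p) ℤ := ↑u⁻¹ with hBdef
    have hAB : A * B = 1 := by rw [← hu, hBdef]; exact u.mul_inv
    have hBA : B * A = 1 := by rw [← hu, hBdef]; exact u.inv_mul
    have hgp : p + (g - p) = g := Nat.add_sub_cancel' hp
    set e : Fin p ⊕ Fin (g - p) ≃ Fin g := finSumFinEquiv.trans (finCongr hgp) with hedef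
    have he1 : ∀ a : Fin p, ((e (Sum.inl a)) : ℕ) = a.val := by
      intro a; simp [hedef]
    have hesymlt : ∀ (k : Fin g) (hk : k.val < p), e.symm k = Sum.inl ⟨k.val, hk⟩ := by
      intro k hk
      rw [Equiv.symm_apply_eq]
      exact (Fin.ext (he1 ⟨k.val, hk⟩)).symm
    have hesymge : ∀ k : Fin g, p ≤ k.val → ∃ b, e.symm k = Sum.inr b := by
      intro k hk
      rcases hsy : e.symm k with a | b
      · exfalso
        have h1 := he1 a
        have h2 : e (Sum.inl a) = k := by rw [← hsy, Equiv.apply_symm_apply]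
        rw [h2] at h1
        have := a.isLt
        omega
      · exact ⟨b, rfl⟩
    set FA : Matrix (Fin p ⊕ Fin (g - p)) (Fin p ⊕ Fin (g - p)) ℤ := fromBlocks A 0 0 1 with hFAdef
    set FB : Matrix (Fin p ⊕ Fin (g - p)) (Fin p ⊕ Fin (g - p)) ℤ := fromBlocks B 0 0 1 with hFBdef
    set M : Matrix (Fin g) (Fin g) ℤ := FA.submatrix e.symm e.symm with hMdef
    set M' : Matrix (Fin g) (Fin g) ℤ := FB.submatrix e.symm e.symm with hM'def
    have hMM' : M * M' = 1 := by
      rw [hMdef, hM'def, submatrix_mul_equiv FA FB _ e.symm _, hFAdef, hFBdef,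
        fromBlocks_multiply]
      simp only [Matrix.mul_zero, Matrix.zero_mul, Matrix.mul_one, Matrix.one_mul, add_zero,
        zero_add, hAB]
      rw [fromBlocks_one, submatrix_one_equiv e.symm]
    have hM'M : M' * M = 1 := by
      rw [hMdef, hM'def, submatrix_mul_equiv FB FA _ e.symm _, hFAdef, hFBdef,
        fromBlocks_multiply]
      simp only [Matrix.mul_zero, Matrix.zero_mul, Matrix.mul_one, Matrix.one_mul, add_zero,
        zero_add, hBA]
      rw [fromBlocks_one, submatrix_one_equiv e.symm]
    have hM_A : ∀ i j : Fin p, M (Fin.castLE hp i) (Fin.castLE hp j) = A i j := by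
      intro i j
      show FA (e.symm (Fin.castLE hp i)) (e.symm (Fin.castLE hp j)) = A i j
      rw [hesymlt _ i.isLt, hesymlt _ j.isLt]
      simp [hFAdef]
    have hM_ll0 : ∀ k j : Fin g, p ≤ k.val → j.val < p → M k j = 0 := by
      intro k j hk hj
      obtain ⟨b, hb⟩ := hesymge k hk
      show FA (e.symm k) (e.symm j) = 0
      rw [hb, hesymlt j hj]
      simp [hFAdef]
    have hM'_ll0 : ∀ k j : Fin g, p ≤ k.val → j.val < p → M' k j = 0 := by
      intro k j hk hj
      obtain ⟨b, hb⟩ := hesymge k hk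
      show FB (e.symm k) (e.symm j) = 0
      rw [hb, hesymlt j hj]
      simp [hFBdef]
    have hB_mod : ∀ i j : Fin p, (m : ℤ) ∣ B i j - (1 : Matrix (Fin p) (Fin p) ℤ) i j := by
      intro i j
      have hfac : B - 1 = (1 - A) * B := by rw [sub_mul, one_mul, hAB]
      have heq : B i j - (1 : Matrix (Fin p) (Fin p) ℤ) i j = ((1 - A) * B) i j := by
        rw [← hfac]; simp [Matrix.sub_apply]
      rw [heq, Matrix.mul_apply]
      apply Finset.dvd_sum
      intro k _
      apply dvd_mul_of_dvd_left
      have h1 : (1 - A) i k = -(A i k - (1 : Matrix (Fin p) (Fin p) ℤ) i k) := by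
        simp [Matrix.sub_apply]
      rw [h1]
      exact dvd_neg.mpr (hA2 i k)
    have hFA_mod : ∀ c d, (m : ℤ) ∣ FA c d
        - (1 : Matrix (Fin p ⊕ Fin (g - p)) (Fin p ⊕ Fin (g - p)) ℤ) c d := by
      rintro (a | a) (b | b)
      · simpa [hFAdef, Matrix.one_apply] using
          (by simpa [Matrix.one_apply] using hA2 a b : (m : ℤ) ∣ A a b - if a = b then 1 else 0)
      · simp [hFAdef]
      · simp [hFAdef]
      · simp [hFAdef, Matrix.one_apply]
    have hFB_mod : ∀ c d, (m : ℤ) ∣ FB c d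
        - (1 : Matrix (Fin p ⊕ Fin (g - p)) (Fin p ⊕ Fin (g - p)) ℤ) c d := by
      rintro (a | a) (b | b)
      · simpa [hFBdef, Matrix.one_apply] using
          (by simpa [Matrix.one_apply] using hB_mod a b : (m : ℤ) ∣ B a b - if a = b then 1 else 0)
      · simp [hFBdef]
      · simp [hFBdef]
      · simp [hFBdef, Matrix.one_apply]
    have hone_e : ∀ k j : Fin g, (1 : Matrix (Fin g) (Fin g) ℤ) k j
        = (1 : Matrix (Fin p ⊕ Fin (g - p)) (Fin p ⊕ Fin (g - p)) ℤ) (e.symm k) (e.symm j) := by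
      intro k j
      simp only [Matrix.one_apply, e.symm.injective.eq_iff]
    have hM_mod : ∀ k j : Fin g, (m : ℤ) ∣ M k j - (1 : Matrix (Fin g) (Fin g) ℤ) k j := by
      intro k j
      rw [hone_e]
      exact hFA_mod _ _
    have hM'_mod : ∀ k j : Fin g, (m : ℤ) ∣ M' k j - (1 : Matrix (Fin g) (Fin g) ℤ) k j := by
      intro k j
      rw [hone_e]
      exact hFB_mod _ _
    refine ⟨fromBlocks M 0 0 M'ᵀ, ?_, ?_, ?_, ?_⟩
    · -- symplectic
      have hMt : Mᵀ * M'ᵀ = 1 := by rw [← Matrix.transpose_mul, hM'M, Matrix.transpose_one]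
      show (fromBlocks M 0 0 M'ᵀ)ᵀ * fromBlocks 0 1 (-1) 0 * fromBlocks M 0 0 M'ᵀ
        = fromBlocks 0 1 (-1) 0
      rw [fromBlocks_transpose, fromBlocks_multiply, fromBlocks_multiply]
      simp [hMt, hM'M, Matrix.neg_mul]
    · -- congruence mod m
      rintro (i | i) (j | j)
      · simpa [Matrix.one_apply] using hM_mod i j
      · simp
      · simp
      · simpa [Matrix.one_apply, eq_comm] using hM'_mod j i
    · -- preserves W
      have hXle := maps_U (p := p) (fromBlocks M 0 0 M'ᵀ)
        (fun k j hk hj => hM_ll0 k j hk hj) (fun k j _ => rfl)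
      have hYle := maps_U (p := p) (fromBlocks M' 0 0 Mᵀ)
        (fun k j hk hj => hM'_ll0 k j hk hj) (fun k j _ => rfl)
      have hXY1 : fromBlocks M 0 0 M'ᵀ * fromBlocks M' 0 0 Mᵀ = (1 : Matrix (Fin g ⊕ Fin g) (Fin g ⊕ Fin g) ℤ) := by
        rw [fromBlocks_multiply]
        have : M'ᵀ * Mᵀ = 1 := by rw [← Matrix.transpose_mul, hMM', Matrix.transpose_one]
        simp [hMM', this, ← fromBlocks_one]
      have hq : ((fromBlocks M 0 0 M'ᵀ).map (fun x : ℤ => (x : ℚ)))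
          * ((fromBlocks M' 0 0 Mᵀ).map (fun x : ℤ => (x : ℚ))) = 1 := by
        rw [show (fun x : ℤ => (x : ℚ)) = ⇑(Int.castRingHom ℚ) from rfl, ← Matrix.map_mul,
          hXY1]
        exact Matrix.map_one _ Int.cast_zero Int.cast_one
      apply le_antisymm hXle
      calc Uspace g p
          = Submodule.map ((((fromBlocks M 0 0 M'ᵀ).map (fun x : ℤ => (x : ℚ))).mulVecLin).comp
              (((fromBlocks M' 0 0 Mᵀ).map (fun x : ℤ => (x : ℚ))).mulVecLin)) (Uspace g p) := by
            rw [← mulVecLin_mul, hq, mulVecLin_one, Submodule.map_id]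
        _ = Submodule.map (((fromBlocks M 0 0 M'ᵀ).map (fun x : ℤ => (x : ℚ))).mulVecLin)
              (Submodule.map (((fromBlocks M' 0 0 Mᵀ).map (fun x : ℤ => (x : ℚ))).mulVecLin)
                (Uspace g p)) := Submodule.map_comp _ _ _
        _ ≤ _ := Submodule.map_mono hYle
    · -- the block
      intro i j
      exact hM_A i j
end

section
/- Let s ≥ 1 and m ≥ 1. Let Sym_s(ℝ) = {X ∈ Mat_s(ℝ) : Xᵀ = X} be the s(s+1)/2-dimensional real vector space of symmetric matrices, and for g ∈ GL_s(ℤ) let τ_g : Sym_s(ℝ) → Sym_s(ℝ) be the linear map X ↦ g·X·gᵀ. Then the determinant of τ_g is positive for every g ∈ GL_s(ℤ)[m] if and only if m ≥ 3, or s is odd. (Equivalently: the action of the congruence subgroup GL_s(ℤ)[m] on the cone of positive definite symmetric matrices is orientation-preserving exactly when m ≥ 3 or s is odd.) -/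
open Matrix

/-- The real vector space of symmetric `s × s` real matrices. -/
def symSubmodule (s : ℕ) : Submodule ℝ (Matrix (Fin s) (Fin s) ℝ) where
  carrier := {X | Xᵀ = X}
  add_mem' := by
    intro a b ha hb
    simp only [Set.mem_setOf_eq] at *
    rw [Matrix.transpose_add, ha, hb]
  zero_mem' := by simp
  smul_mem' := by
    intro c a ha
    simp only [Set.mem_setOf_eq] at *
    rw [Matrix.transpose_smul, ha]

/-- The linear map `X ↦ g · X · gᵀ` on `s × s` real matrices. -/
noncomputable def congLin (s : ℕ) (g : Matrix (Fin s) (Fin s) ℝ) :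
    Matrix (Fin s) (Fin s) ℝ →ₗ[ℝ] Matrix (Fin s) (Fin s) ℝ where
  toFun X := g * X * gᵀ
  map_add' X Y := by
    rw [Matrix.mul_add, Matrix.add_mul]
  map_smul' c X := by
    rw [Matrix.mul_smul, Matrix.smul_mul]
    try rfl

/-- The restriction `τ_g` of `X ↦ g · X · gᵀ` to the subspace of symmetric
matrices. -/
noncomputable def tauSym (s : ℕ) (g : Matrix (Fin s) (Fin s) ℝ) :
    symSubmodule s →ₗ[ℝ] symSubmodule s :=
  (congLin s g).restrict (fun X hX => by
    have h : Xᵀ = X := hX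
    show (g * X * gᵀ)ᵀ = g * X * gᵀ
    rw [Matrix.transpose_mul, Matrix.transpose_mul, Matrix.transpose_transpose, h,
      Matrix.mul_assoc])

namespace Stmt12Aux

abbrev Idx (s : ℕ) := {p : Fin s × Fin s // p.1 ≤ p.2}

variable {s : ℕ}

noncomputable def symEquiv (s : ℕ) : symSubmodule s ≃ₗ[ℝ] (Idx s → ℝ) where
  toFun X p := X.1 p.1.1 p.1.2
  map_add' X Y := rfl
  map_smul' c X := rfl
  invFun c := ⟨fun a b => if h : a ≤ b then c ⟨(a,b),h⟩ else c ⟨(b,a), le_of_not_ge h⟩, by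
    show (fun a b => _ : Matrix (Fin s) (Fin s) ℝ)ᵀ = _
    ext a b
    show (if h : b ≤ a then c ⟨(b,a),h⟩ else c ⟨(a,b), le_of_not_ge h⟩)
      = (if h : a ≤ b then c ⟨(a,b),h⟩ else c ⟨(b,a), le_of_not_ge h⟩)
    rcases le_total a b with h | h
    · rcases le_total b a with h' | h'
      · have : a = b := le_antisymm h h'
        subst this
        rfl
      · rw [dif_pos h]
        by_cases hba : b ≤ a
        · rw [dif_pos hba]
          have : a = b := le_antisymm h hba
          subst this; rfl
        · rw [dif_neg hba]
    · by_cases hab : a ≤ b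
      · have : a = b := le_antisymm hab h
        subst this; rfl
      · rw [dif_neg hab, dif_pos h]⟩
  left_inv X := by
    apply Subtype.ext
    ext a b
    show (if h : a ≤ b then X.1 a b else X.1 b a) = X.1 a b
    split
    · rfl
    · have h : X.1ᵀ = X.1 := X.2
      exact congrFun (congrFun h a) b ▸ rfl
  right_inv c := by
    funext p
    show (if h : p.1.1 ≤ p.1.2 then _ else _) = c p
    rw [dif_pos p.2]

noncomputable def symBasis (s : ℕ) : Module.Basis (Idx s) ℝ (symSubmodule s) :=
  .ofEquivFun (symEquiv s)

lemma symEquiv_symm_val (c : Idx s → ℝ) (a b : Fin s) :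
    (((symEquiv s).symm c : symSubmodule s) : Matrix (Fin s) (Fin s) ℝ) a b
      = if h : a ≤ b then c ⟨(a,b),h⟩ else c ⟨(b,a), le_of_not_ge h⟩ := rfl

lemma symBasis_val (q : Idx s) (a b : Fin s) :
    ((symBasis s q : symSubmodule s) : Matrix (Fin s) (Fin s) ℝ) a b
      = if (a,b) = q.1 ∨ (b,a) = q.1 then 1 else 0 := by
  have : symBasis s q = (symEquiv s).symm (Pi.single q 1) := by
    rw [symBasis, Module.Basis.coe_ofEquivFun]
  rw [this, symEquiv_symm_val]
  by_cases h : a ≤ b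
  · rw [dif_pos h, Pi.single_apply]
    congr 1
    simp only [Subtype.ext_iff, eq_iff_iff]
    constructor
    · exact fun h' => Or.inl h'
    · rintro (h' | h')
      · exact h'
      · have hba : b ≤ a := by have := q.2; rw [← h'] at this; exact this
        have : a = b := le_antisymm h hba
        subst this; exact h'
  · rw [dif_neg h, Pi.single_apply]
    congr 1
    simp only [Subtype.ext_iff, eq_iff_iff]
    constructor
    · exact fun h' => Or.inr h'
    · rintro (h' | h')
      · exact absurd (by have := q.2; rw [← h'] at this; exact this : a ≤ b) h
      · exact h'

lemma toMatrix_tauSym_apply (g : Matrix (Fin s) (Fin s) ℝ) (p q : Idx s) :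
    LinearMap.toMatrix (symBasis s) (symBasis s) (tauSym s g) p q
      = (g * ((symBasis s q : symSubmodule s) : Matrix (Fin s) (Fin s) ℝ) * gᵀ) p.1.1 p.1.2 := by
  rw [LinearMap.toMatrix_apply]
  rfl

lemma symBasis_val_self (p q : Idx s) :
    ((symBasis s q : symSubmodule s) : Matrix (Fin s) (Fin s) ℝ) p.1.1 p.1.2
      = if p = q then 1 else 0 := by
  rw [symBasis_val]
  congr 1
  simp only [eq_iff_iff]
  constructor
  · rintro (h | h)
    · exact Subtype.ext h
    · have h1 : q.1.1 = p.1.2 := by rw [← h]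
      have h2 : q.1.2 = p.1.1 := by rw [← h]
      have : p.1.1 = p.1.2 := le_antisymm p.2 (h1 ▸ h2 ▸ q.2)
      apply Subtype.ext
      rw [← h, Prod.ext_iff]
      exact ⟨this, this.symm⟩
  · rintro rfl
    exact Or.inl rfl

open Finset in
lemma prod_pairs (d : Fin s → ℝ) :
    ∏ p : Idx s, d p.1.1 * d p.1.2 = (∏ i, d i) ^ (s + 1) := by
  classical
  set P := ∏ i, d i with hP
  have h1 : ∏ p : Idx s, d p.1.1 * d p.1.2
      = ∏ p ∈ Finset.univ.filter (fun p : Fin s × Fin s => p.1 ≤ p.2), d p.1 * d p.2 :=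
    (Finset.prod_subtype (p := fun p : Fin s × Fin s => p.1 ≤ p.2) _ (by simp)
      (fun p => d p.1 * d p.2)).symm
  have hA : ∏ p ∈ Finset.univ.filter (fun p : Fin s × Fin s => p.1 ≤ p.2), d p.1
      = ∏ p ∈ Finset.univ.filter (fun p : Fin s × Fin s => p.2 ≤ p.1), d p.2 := by
    apply Finset.prod_nbij' (fun p => (p.2, p.1)) (fun p => (p.2, p.1)) <;> simp
  have hsplit : (∏ p ∈ Finset.univ.filter (fun p : Fin s × Fin s => p.2 ≤ p.1), d p.2)
      * (∏ p ∈ Finset.univ.filter (fun p : Fin s × Fin s => p.1 < p.2), d p.2) = P ^ s := by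
    have h2 : Finset.univ.filter (fun p : Fin s × Fin s => p.1 < p.2)
        = Finset.univ.filter (fun p : Fin s × Fin s => ¬ p.2 ≤ p.1) := by
      apply Finset.filter_congr; intro p _; exact lt_iff_not_ge
    rw [h2, Finset.prod_filter_mul_prod_filter_not]
    rw [Fintype.prod_prod_type]
    simp [hP, Finset.prod_const]
  have hB : ∏ p ∈ Finset.univ.filter (fun p : Fin s × Fin s => p.1 ≤ p.2), d p.2
      = (∏ p ∈ Finset.univ.filter (fun p : Fin s × Fin s => p.1 < p.2), d p.2) * P := by
    rw [← Finset.prod_filter_mul_prod_filter_not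
      (Finset.univ.filter (fun p : Fin s × Fin s => p.1 ≤ p.2))
      (fun p => p.1 < p.2) (fun p => d p.2)]
    congr 1
    · apply Finset.prod_congr _ (fun _ _ => rfl)
      rw [Finset.filter_filter]
      apply Finset.filter_congr; intro p _
      constructor
      · exact fun h => h.2
      · exact fun h => ⟨le_of_lt h, h⟩
    · have himg : (Finset.univ.filter (fun p : Fin s × Fin s => p.1 ≤ p.2)).filter
          (fun p => ¬ p.1 < p.2) = Finset.univ.image (fun i : Fin s => (i, i)) := by
        ext p
        simp only [Finset.mem_filter, Finset.mem_univ, true_and, Finset.mem_image,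
          Finset.filter_filter]
        constructor
        · rintro ⟨h1, h2⟩
          exact ⟨p.1, by rw [Prod.ext_iff]; exact ⟨rfl, le_antisymm h1 (not_lt.mp h2)⟩⟩
        · rintro ⟨i, rfl⟩
          simp
      rw [himg, Finset.prod_image (by intro a _ b _ h; simpa [Prod.ext_iff] using h)]
  rw [h1, Finset.prod_mul_distrib, hA, hB, ← mul_assoc, hsplit, pow_succ]

lemma det_tauSym_diagonal (d : Fin s → ℝ) :
    LinearMap.det (tauSym s (diagonal d)) = (∏ i, d i) ^ (s + 1) := by
  classical
  rw [← LinearMap.det_toMatrix (symBasis s)]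
  have hmat : LinearMap.toMatrix (symBasis s) (symBasis s) (tauSym s (diagonal d))
      = diagonal (fun p : Idx s => d p.1.1 * d p.1.2) := by
    ext p q
    rw [toMatrix_tauSym_apply, diagonal_transpose, mul_diagonal, diagonal_mul, symBasis_val_self]
    by_cases h : p = q
    · subst h; simp [Matrix.diagonal_apply_eq, mul_comm]
    · simp [Matrix.diagonal_apply_ne _ h, h]
  rw [hmat, det_diagonal, prod_pairs]

section Transvection

variable (i j : Fin s) (c : ℝ)

lemma stdBasisMatrix_transpose' :
    (Matrix.single i j c)ᵀ = Matrix.single j i c := by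
  ext a b
  simp [Matrix.single, and_comm]

lemma conj_entry (M : Matrix (Fin s) (Fin s) ℝ) (a b : Fin s) :
    (transvection i j c * M * (transvection i j c)ᵀ) a b
      = M a b + (if a = i then c * M j b else 0) + (if b = i then M a j * c else 0)
        + (if a = i then (if b = i then c * (M j j * c) else 0) else 0) := by
  set E := Matrix.single i j c with hE
  have hME : ∀ a' b' : Fin s, (M * Eᵀ) a' b' = (if b' = i then M a' j * c else 0) := by
    intro a' b'
    rw [hE, stdBasisMatrix_transpose']
    by_cases hb : b' = i
    · rw [if_pos hb, hb, Matrix.mul_single_apply_same c j i]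
    · rw [if_neg hb, Matrix.mul_single_apply_of_ne c j i _ _ hb]
  have hEM : ∀ (N : Matrix (Fin s) (Fin s) ℝ) (a' b' : Fin s),
      (E * N) a' b' = (if a' = i then c * N j b' else 0) := by
    intro N a' b'
    rw [hE]
    by_cases ha : a' = i
    · rw [if_pos ha, ha, Matrix.single_mul_apply_same c i j]
    · rw [if_neg ha, Matrix.single_mul_apply_of_ne c i j _ _ ha]
  have expand : transvection i j c * M * (transvection i j c)ᵀ
      = M + E * M + M * Eᵀ + E * (M * Eᵀ) := by
    rw [transvection, ← hE, transpose_add, transpose_one]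
    rw [add_mul, one_mul, mul_add, mul_one, add_mul, Matrix.mul_assoc]
    abel
  rw [expand]
  simp only [Matrix.add_apply]
  rw [hEM, hME, hEM (M * Eᵀ), hME j b]
  congr 1
  by_cases ha : a = i
  · rw [if_pos ha, if_pos ha]
    by_cases hb : b = i
    · rw [if_pos hb, if_pos hb]
    · rw [if_neg hb, if_neg hb, mul_zero]
  · rw [if_neg ha, if_neg ha]

def wt (i : Fin s) (p : Idx s) : ℕ :=
  (if p.1.1 = i then 1 else 0) + (if p.1.2 = i then 1 else 0)

lemma tauMatrix_apply_eq_zero (hij : i ≠ j) (p q : Idx s) (hpq : p ≠ q)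
    (hw : ¬ wt i q < wt i p) :
    LinearMap.toMatrix (symBasis s) (symBasis s) (tauSym s (transvection i j c)) p q = 0 := by
  rw [toMatrix_tauSym_apply, conj_entry]
  set M := ((symBasis s q : symSubmodule s) : Matrix (Fin s) (Fin s) ℝ) with hM
  have h1 : M p.1.1 p.1.2 = 0 := by
    rw [hM, symBasis_val_self, if_neg hpq]
  have h2 : p.1.1 = i → M j p.1.2 = 0 := by
    intro hp1
    rw [hM, symBasis_val, if_neg]
    rintro (h | h)
    · apply hw
      have e1 : q.1.1 = j := by rw [← h]
      have e2 : q.1.2 = p.1.2 := by rw [← h]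
      by_cases h2i : p.1.2 = i <;> simp [wt, e1, e2, hp1, Ne.symm hij, h2i]
    · apply hw
      have e1 : q.1.1 = p.1.2 := by rw [← h]
      have e2 : q.1.2 = j := by rw [← h]
      by_cases h2i : p.1.2 = i <;> simp [wt, e1, e2, hp1, Ne.symm hij, h2i]
  have h3 : p.1.2 = i → M p.1.1 j = 0 := by
    intro hp2
    rw [hM, symBasis_val, if_neg]
    rintro (h | h)
    · apply hw
      have e1 : q.1.1 = p.1.1 := by rw [← h]
      have e2 : q.1.2 = j := by rw [← h]
      by_cases h1i : p.1.1 = i <;> simp [wt, e1, e2, hp2, Ne.symm hij, h1i]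
    · apply hw
      have e1 : q.1.1 = j := by rw [← h]
      have e2 : q.1.2 = p.1.1 := by rw [← h]
      by_cases h1i : p.1.1 = i <;> simp [wt, e1, e2, hp2, Ne.symm hij, h1i]
  have h4 : p.1.1 = i → p.1.2 = i → M j j = 0 := by
    intro hp1 hp2
    rw [hM, symBasis_val, if_neg]
    rintro (h | h) <;>
    · apply hw
      have e1 : q.1.1 = j := by rw [← h]
      have e2 : q.1.2 = j := by rw [← h]
      simp [wt, e1, e2, hp1, hp2, Ne.symm hij]
  by_cases ha : p.1.1 = i
  · by_cases hb : p.1.2 = i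
    · rw [h1, h2 ha, h3 hb, h4 ha hb]; simp
    · rw [h1, h2 ha]; simp [hb]
  · by_cases hb : p.1.2 = i
    · rw [h1, h3 hb]; simp [ha]
    · rw [h1]; simp [ha, hb]

lemma tauMatrix_apply_diag (hij : i ≠ j) (p : Idx s) :
    LinearMap.toMatrix (symBasis s) (symBasis s) (tauSym s (transvection i j c)) p p = 1 := by
  rw [toMatrix_tauSym_apply, conj_entry]
  set M := ((symBasis s p : symSubmodule s) : Matrix (Fin s) (Fin s) ℝ) with hM
  have h1 : M p.1.1 p.1.2 = 1 := by
    rw [hM, symBasis_val_self, if_pos rfl]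
  have h2 : p.1.1 = i → M j p.1.2 = 0 := by
    intro ha
    rw [hM, symBasis_val, if_neg]
    rintro (h | h)
    · have e1 := congrArg Prod.fst h
      exact hij (ha.symm.trans e1.symm)
    · have e1 := congrArg Prod.fst h
      have e2 := congrArg Prod.snd h
      exact hij (ha.symm.trans (e1.symm.trans e2.symm))
  have h3 : p.1.2 = i → M p.1.1 j = 0 := by
    intro hb
    rw [hM, symBasis_val, if_neg]
    rintro (h | h)
    · have e2 := congrArg Prod.snd h
      exact hij (hb.symm.trans e2.symm)
    · have e1 := congrArg Prod.fst h
      have e2 := congrArg Prod.snd h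
      exact hij (hb.symm.trans (e2.symm.trans e1.symm))
  have h5 : p.1.1 = i → M j j = 0 := by
    intro ha
    rw [hM, symBasis_val, if_neg]
    rintro (h | h) <;>
    · have e1 := congrArg Prod.fst h
      exact hij (ha.symm.trans e1.symm)
  by_cases ha : p.1.1 = i
  · by_cases hb : p.1.2 = i
    · rw [h1, h2 ha, h3 hb, h5 ha]; simp
    · rw [h1, h2 ha]; simp [hb]
  · by_cases hb : p.1.2 = i
    · rw [h1, h3 hb]; simp [ha]
    · rw [h1]; simp [ha, hb]

lemma det_tauSym_transvection (hij : i ≠ j) :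
    LinearMap.det (tauSym s (transvection i j c)) = 1 := by
  classical
  rw [← LinearMap.det_toMatrix (symBasis s)]
  set A := LinearMap.toMatrix (symBasis s) (symBasis s) (tauSym s (transvection i j c)) with hA
  have hbt : A.BlockTriangular (fun p => OrderDual.toDual (wt i p)) := by
    intro p q h
    have hlt : wt i p < wt i q := h
    apply tauMatrix_apply_eq_zero i j c hij
    · rintro rfl; exact lt_irrefl _ hlt
    · exact fun h' => lt_asymm hlt h'
  rw [hbt.det]
  apply Finset.prod_eq_one
  intro a _
  have hblock : A.toSquareBlock (fun p => OrderDual.toDual (wt i p)) a = 1 := by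
    ext p q
    simp only [Matrix.toSquareBlock_def]
    by_cases hpq : p = q
    · subst hpq
      rw [Matrix.one_apply_eq]
      exact tauMatrix_apply_diag i j c hij p.1
    · rw [Matrix.one_apply_ne hpq]
      have hv : p.1 ≠ q.1 := fun h => hpq (Subtype.ext h)
      have hweq : wt i q.1 = wt i p.1 := by
        have hp := p.2
        have hq := q.2
        change OrderDual.toDual (wt i p.1) = a at hp
        change OrderDual.toDual (wt i q.1) = a at hq
        exact (OrderDual.toDual_inj.mp (hq.trans hp.symm))
      exact tauMatrix_apply_eq_zero i j c hij p.1 q.1 hv (by rw [hweq]; exact lt_irrefl _)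
  rw [hblock, Matrix.det_one]

end Transvection

lemma tauSym_mul (A B : Matrix (Fin s) (Fin s) ℝ) :
    tauSym s (A * B) = (tauSym s A).comp (tauSym s B) := by
  apply LinearMap.ext
  intro X
  apply Subtype.ext
  show (A * B) * (X : Matrix (Fin s) (Fin s) ℝ) * (A * B)ᵀ
      = A * (B * (X : Matrix (Fin s) (Fin s) ℝ) * Bᵀ) * Aᵀ
  rw [Matrix.transpose_mul]
  noncomm_ring

lemma det_tauSym (g : Matrix (Fin s) (Fin s) ℝ) :
    LinearMap.det (tauSym s g) = g.det ^ (s + 1) := by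
  refine Matrix.diagonal_transvection_induction
    (fun N => LinearMap.det (tauSym s N) = N.det ^ (s + 1)) g
    (fun D _ => ?_) (fun t => ?_) (fun A B hA hB => ?_)
  · show LinearMap.det (tauSym s (diagonal D)) = (diagonal D).det ^ (s + 1)
    rw [det_tauSym_diagonal, Matrix.det_diagonal]
  · show LinearMap.det (tauSym s t.toMatrix) = t.toMatrix.det ^ (s + 1)
    obtain ⟨ti, tj, htij, tc⟩ := t
    rw [Matrix.TransvectionStruct.toMatrix_mk, det_tauSym_transvection ti tj tc htij,
      Matrix.det_transvection_of_ne ti tj htij, one_pow]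
  · show LinearMap.det (tauSym s (A * B)) = (A * B).det ^ (s + 1)
    rw [tauSym_mul, LinearMap.det_comp, hA, hB, Matrix.det_mul, mul_pow]

end Stmt12Aux


/-- For `s ≥ 1` and `m ≥ 1`, the determinant of
`τ_g : Sym_s(ℝ) → Sym_s(ℝ)` is positive for every `g ∈ GL_s(ℤ)[m]` if and only
if `m ≥ 3` or `s` is odd. -/
theorem stmt_12 (s m : ℕ) (hs : 1 ≤ s) (hm : 1 ≤ m) :
    (∀ g : Matrix (Fin s) (Fin s) ℤ, IsUnit g →
        (∀ i j, (m : ℤ) ∣ (g i j - (1 : Matrix (Fin s) (Fin s) ℤ) i j)) →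
        0 < LinearMap.det (tauSym s (g.map (fun x : ℤ => (x : ℝ))))) ↔
      (3 ≤ m ∨ Odd s) := by
  constructor
  · intro H
    by_contra hc
    push_neg at hc
    obtain ⟨hm3, hse⟩ := hc
    rw [Nat.not_odd_iff_even] at hse
    set g : Matrix (Fin s) (Fin s) ℤ :=
      diagonal (fun k => if k = (⟨0, hs⟩ : Fin s) then -1 else 1) with hg
    have hsq : g * g = 1 := by
      have hfun : (fun k => (if k = (⟨0, hs⟩ : Fin s) then (-1 : ℤ) else 1)
          * (if k = (⟨0, hs⟩ : Fin s) then (-1 : ℤ) else 1)) = fun _ => 1 := by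
        funext k
        by_cases h : k = (⟨0, hs⟩ : Fin s) <;> simp [h]
      rw [hg, diagonal_mul_diagonal, hfun, Matrix.diagonal_one]
    have hunit : IsUnit g := ⟨⟨g, g, hsq, hsq⟩, rfl⟩
    have hcong : ∀ a b, (m : ℤ) ∣ g a b - (1 : Matrix (Fin s) (Fin s) ℤ) a b := by
      intro a b
      by_cases hab : a = b
      · subst hab
        rw [hg, Matrix.diagonal_apply_eq, Matrix.one_apply_eq]
        by_cases h : a = (⟨0, hs⟩ : Fin s)
        · rw [if_pos h]
          have h2 : (m : ℤ) ∣ 2 := by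
            have : m = 1 ∨ m = 2 := by omega
            rcases this with h' | h' <;> subst h' <;> norm_num
          have : (-1 : ℤ) - 1 = -2 := by norm_num
          rw [this]
          exact h2.neg_right
        · rw [if_neg h]
          simp
      · rw [hg, Matrix.diagonal_apply_ne _ hab, Matrix.one_apply_ne hab]
        simp
    have hH := H g hunit hcong
    have hmap : (g.map (fun x : ℤ => (x : ℝ)))
        = diagonal (fun k => if k = (⟨0, hs⟩ : Fin s) then (-1 : ℝ) else 1) := by
      rw [hg, Matrix.diagonal_map (by simp)]
      funext k
      by_cases h : k = (⟨0, hs⟩ : Fin s) <;> simp [h]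
    rw [Stmt12Aux.det_tauSym, hmap, Matrix.det_diagonal] at hH
    have hprod : (∏ k : Fin s, if k = (⟨0, hs⟩ : Fin s) then (-1 : ℝ) else 1) = -1 := by
      rw [Finset.prod_ite_eq' Finset.univ (⟨0, hs⟩ : Fin s) (fun _ => (-1 : ℝ))]
      simp
    rw [hprod] at hH
    have hodd : Odd (s + 1) := by
      rcases hse with ⟨k, hk⟩
      exact ⟨k, by omega⟩
    rw [hodd.neg_one_pow] at hH
    linarith
  · rintro h g hunit hcong
    rw [Stmt12Aux.det_tauSym]
    have hdet : (g.map (fun x : ℤ => (x : ℝ))).det = ((g.det : ℤ) : ℝ) := by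
      have h2 := RingHom.map_det (Int.castRingHom ℝ) g
      rw [RingHom.mapMatrix_apply] at h2
      exact h2.symm
    have hpm : g.det = 1 ∨ g.det = -1 :=
      Int.isUnit_iff.mp ((Matrix.isUnit_iff_isUnit_det g).mp hunit)
    rcases h with hm3 | hodd
    · have hdet1 : g.det = 1 := by
        rcases hpm with h1 | h1
        · exact h1
        · exfalso
          haveI : NeZero m := ⟨by omega⟩
          have hmapZ : g.map (Int.cast : ℤ → ZMod m) = 1 := by
            have : g.map (Int.cast : ℤ → ZMod m)
                = (1 : Matrix (Fin s) (Fin s) ℤ).map (Int.cast : ℤ → ZMod m) := by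
              ext a b
              rw [Matrix.map_apply, Matrix.map_apply]
              have h0 : ((g a b - (1 : Matrix (Fin s) (Fin s) ℤ) a b : ℤ) : ZMod m) = 0 := by
                rw [ZMod.intCast_zmod_eq_zero_iff_dvd]
                exact_mod_cast hcong a b
              rw [Int.cast_sub] at h0
              exact sub_eq_zero.mp h0
            rw [this]
            exact Matrix.map_one _ Int.cast_zero Int.cast_one
          have hdetZ : ((g.det : ℤ) : ZMod m) = 1 := by
            have h3 := RingHom.map_det (Int.castRingHom (ZMod m)) g
            rw [RingHom.mapMatrix_apply] at h3
            rw [show g.map ⇑(Int.castRingHom (ZMod m)) = g.map (Int.cast : ℤ → ZMod m) from rfl,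
              hmapZ, Matrix.det_one] at h3
            exact h3
          rw [h1] at hdetZ
          have h2 : ((2 : ℕ) : ZMod m) = 0 := by
            push_cast at hdetZ ⊢
            linear_combination -hdetZ
          rw [ZMod.natCast_eq_zero_iff] at h2
          have := Nat.le_of_dvd (by norm_num) h2
          omega
      rw [hdet, hdet1]
      norm_num
    · have heven : Even (s + 1) := by
        rcases hodd with ⟨k, hk⟩
        exact ⟨k + 1, by omega⟩
      rcases hpm with h1 | h1 <;> rw [hdet, h1]
      · norm_num
      · push_cast
        rw [heven.neg_one_pow]
        norm_num
end
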